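/- Let p, p′, a, a′ : ℤ → [0,1]. Then the quantum walks U_{p,a} := U_{p,a,0,0} and U_{p′,a′} := U_{p′,a′,0,0} are unitarily equivalent if and only if p = p′ and a = a′. -/

import Mathlib

noncomputable section

/-- `H = ⊕_{x∈ℤ} H_x`, the ℓ² direct sum with each `H_x` a copy of `ℂ²`. -/
abbrev H : Type := lp (fun _ : ℤ × Fin 2 => ℂ) 2

/-- The canonical orthonormal basis vector `eᵢˣ` of `H_x` viewed in `H`. -/
def e (x : ℤ) (i : Fin 2) : H := lp.single 2 (x, i) 1

/-- The subspace `H_x` of `H`. -/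
def Hx (x : ℤ) : Submodule ℂ H := Submodule.span ℂ {e x 0, e x 1}

/-- The rank-one operator `|u⟩⟨v| : w ↦ ⟨v, w⟩ u`. -/
def ketbra (u v : H) : H →L[ℂ] H := ((innerSL ℂ) v).smulRight u

/-- The orthogonal projection of `H` onto `H_x`. -/
def P (x : ℤ) : H →L[ℂ] H := ketbra (e x 0) (e x 0) + ketbra (e x 1) (e x 1)

/-- A unitary (linear isometric equivalence) viewed as a continuous linear map. -/
def clm (U : H ≃ₗᵢ[ℂ] H) : H →L[ℂ] H := U.toLinearIsometry.toContinuousLinearMap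

/-- `{u, v}` is an orthonormal basis of the two dimensional space `H_x`. -/
def ONBx (x : ℤ) (u v : H) : Prop :=
  u ∈ Hx x ∧ v ∈ Hx x ∧ ‖u‖ = 1 ∧ ‖v‖ = 1 ∧ (inner ℂ u v : ℂ) = 0

/-- The SSQW conditions: `U H_x ⊆ H_{x-1} ⊕ H_x ⊕ H_{x+1}` and
`rank(P_{x±1} U P_x) ≤ 1` for all `x`. -/
def SSQW (U : H ≃ₗᵢ[ℂ] H) : Prop :=
  (∀ x : ℤ, ∀ ψ ∈ Hx x, U ψ ∈ Hx (x - 1) ⊔ Hx x ⊔ Hx (x + 1)) ∧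
  (∀ x : ℤ, LinearMap.rank (((P (x + 1)).comp ((clm U).comp (P x))).toLinearMap) ≤ 1) ∧
  (∀ x : ℤ, LinearMap.rank (((P (x - 1)).comp ((clm U).comp (P x))).toLinearMap) ≤ 1)

/-- Unitary equivalence of quantum walks: conjugation by a unitary `W`
preserving every `H_x`. -/
def UnitEquiv (U U' : H ≃ₗᵢ[ℂ] H) : Prop :=
  ∃ W : H ≃ₗᵢ[ℂ] H,
    (∀ x : ℤ, (Hx x).map (W.toLinearEquiv : H →ₗ[ℂ] H) = Hx x) ∧
    U' = (W.symm.trans U).trans W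

/-- `V` is the quantum walk `U_{p,r,θ,κ}`: with `q_x = √(1-p_x²)` and
`s_x = √(1-r_x²)`, it sends `e^{iκ_x} r_x e₁ˣ + s_x e₂ˣ` to
`e^{iθ_x} p_x e₁ˣ + q_x e₂^{x+1}`, and `s_x e₁ˣ − e^{−iκ_x} r_x e₂ˣ` to
`q_{x−1} e₁^{x−1} − e^{−iθ_{x−1}} p_{x−1} e₂ˣ`, for every `x ∈ ℤ`. -/
def IsUprtk (p r θ κ : ℤ → ℝ) (V : H ≃ₗᵢ[ℂ] H) : Prop :=
  ∀ x : ℤ,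
    V ((Complex.exp (Complex.I * (κ x : ℂ)) * (r x : ℂ)) • e x 0
        + (Real.sqrt (1 - (r x) ^ 2) : ℂ) • e x 1)
      = (Complex.exp (Complex.I * (θ x : ℂ)) * (p x : ℂ)) • e x 0
        + (Real.sqrt (1 - (p x) ^ 2) : ℂ) • e (x + 1) 1 ∧
    V ((Real.sqrt (1 - (r x) ^ 2) : ℂ) • e x 0
        - (Complex.exp (-(Complex.I * (κ x : ℂ))) * (r x : ℂ)) • e x 1)
      = (Real.sqrt (1 - (p (x - 1)) ^ 2) : ℂ) • e (x - 1) 0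
        - (Complex.exp (-(Complex.I * (θ (x - 1) : ℂ))) * (p (x - 1) : ℂ)) • e x 1

/-!
Write `q_x = √(1 - p_x²)`, `s_x = √(1 - a_x²)`, `u_x = a_x e₁ˣ + s_x e₂ˣ` and
`v_x = s_x e₁ˣ - a_x e₂ˣ` (`rightVec a x` and `leftVec a x` below, where `e₁ˣ, e₂ˣ` are
`e x 0, e x 1`). The blocks of `U = U_{p,a}` between the fibres are
`P_{x+1} U P_x = q_x |e₂^{x+1}⟩⟨u_x|`, `P_x U P_{x+1} = q_x |e₁ˣ⟩⟨v_{x+1}|` and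
`P_x U P_x = p_x |e₁ˣ⟩⟨u_x| - p_{x-1} |e₂ˣ⟩⟨v_x|`, and a unitary equivalence preserving every
`H_x` conjugates each block by unitaries of the fibres.

The norm `q_x` of the first block is therefore an invariant, so `p = p'`. The trace
`a_x (p_x + p_{x-1})` of the diagonal block is an invariant as well, which recovers `a_x` unless
`p_x = p_{x-1} = 0`. In that case `q_x = 1`, and equality in Cauchy–Schwarz for the two rank-one
blocks forces the equivalence to map the line of `u_x` onto that of `u'_x` and the line of `e₁ˣ`
onto itself, so `a_x = |⟨e₁ˣ, u_x⟩|` is an invariant. Conversely, `U_{p,a}` is determined by `p`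
and `a`.
-/

local notation "⟪" x ", " y "⟫" => (inner ℂ x y : ℂ)

lemma eq_inner_smul_of_norm_inner_eq_one {𝕜 E : Type*} [RCLike 𝕜] [NormedAddCommGroup E]
    [InnerProductSpace 𝕜 E] {φ ψ : E} (hφ : ‖φ‖ = 1) (hψ : ‖ψ‖ = 1)
    (h : ‖(inner 𝕜 φ ψ : 𝕜)‖ = 1) : ψ = (inner 𝕜 φ ψ : 𝕜) • φ := by
  obtain ⟨c, -, rfl⟩ := (norm_inner_eq_norm_iff (𝕜 := 𝕜) (norm_ne_zero_iff.1 (hφ ▸ one_ne_zero))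
    (norm_ne_zero_iff.1 (hψ ▸ one_ne_zero))).1 (by rw [h, hφ, hψ, one_mul])
  rw [inner_smul_right, inner_self_eq_norm_sq_to_K, hφ]
  simp

lemma norm_inner_le_one {𝕜 E : Type*} [RCLike 𝕜] [NormedAddCommGroup E] [InnerProductSpace 𝕜 E]
    {φ ψ : E} (hφ : ‖φ‖ = 1) (hψ : ‖ψ‖ = 1) : ‖(inner 𝕜 φ ψ : 𝕜)‖ ≤ 1 :=
  (norm_inner_le_norm φ ψ).trans (by rw [hφ, hψ, one_mul])

lemma norm_eq_one_of_inner_self_eq_one {𝕜 E : Type*} [RCLike 𝕜] [NormedAddCommGroup E]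
    [InnerProductSpace 𝕜 E] {ψ : E} (h : (inner 𝕜 ψ ψ : 𝕜) = 1) : ‖ψ‖ = 1 := by
  have h' : ‖ψ‖ ^ 2 = 1 := by rw [norm_sq_eq_re_inner (𝕜 := 𝕜), h, RCLike.one_re]
  exact (pow_eq_one_iff_of_nonneg (norm_nonneg ψ) two_ne_zero).1 h'

lemma norm_eq_one_of_eq_mul_mul {𝕜 : Type*} [NormedDivisionRing 𝕜] {q α β : 𝕜} (hq : q ≠ 0)
    (h : q = q * α * β) (hα : ‖α‖ ≤ 1) (hβ : ‖β‖ ≤ 1) : ‖α‖ = 1 ∧ ‖β‖ = 1 := by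
  rw [mul_assoc, eq_comm, mul_eq_left₀ hq] at h
  have := congrArg norm h
  rw [norm_mul, norm_one] at this
  constructor <;> nlinarith [norm_nonneg α, norm_nonneg β]

lemma inner_e_e (x y : ℤ) (i j : Fin 2) :
    ⟪e x i, e y j⟫ = if x = y ∧ i = j then 1 else 0 := by
  rw [e, e, lp.inner_single_left, lp.single_apply, Pi.single_apply]
  by_cases h : x = y ∧ i = j
  · obtain ⟨rfl, rfl⟩ := h
    simp
  · rw [if_neg (by simpa [Prod.ext_iff] using h), if_neg h, inner_zero_right]

lemma norm_e (x : ℤ) (i : Fin 2) : ‖e x i‖ = 1 := by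
  simp [e, lp.norm_single]

lemma e_mem_Hx (x : ℤ) (i : Fin 2) : e x i ∈ Hx x := by
  fin_cases i
  · exact Submodule.subset_span (Set.mem_insert _ _)
  · exact Submodule.subset_span (Set.mem_insert_of_mem _ rfl)

lemma inner_eq_zero_of_mem_Hx {x y : ℤ} (hxy : x ≠ y) {φ ψ : H} (hφ : φ ∈ Hx x)
    (hψ : ψ ∈ Hx y) : ⟪φ, ψ⟫ = 0 := by
  obtain ⟨c, d, rfl⟩ := Submodule.mem_span_pair.1 hφ
  obtain ⟨c', d', rfl⟩ := Submodule.mem_span_pair.1 hψ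
  simp [inner_e_e, hxy]

instance (x : ℤ) : FiniteDimensional ℂ (Hx x) :=
  FiniteDimensional.span_of_finite ℂ (Set.toFinite _)

lemma finrank_Hx_le (x : ℤ) : Module.finrank ℂ (Hx x) ≤ 2 := by
  classical
  refine (finrank_span_le_card _).trans ?_
  rw [Set.toFinset_insert, Set.toFinset_singleton]
  exact Finset.card_le_two

lemma onbx_e (x : ℤ) : ONBx x (e x 0) (e x 1) :=
  ⟨e_mem_Hx x 0, e_mem_Hx x 1, norm_e x 0, norm_e x 1, by simp [inner_e_e]⟩

namespace ONBx

variable {x : ℤ} {f₀ f₁ : H}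

lemma eq_add (hf : ONBx x f₀ f₁) {ξ : H} (hξ : ξ ∈ Hx x) : ξ = ⟪f₀, ξ⟫ • f₀ + ⟪f₁, ξ⟫ • f₁ := by
  obtain ⟨h₀, h₁, n₀, n₁, o⟩ := hf
  have o' : ⟪f₁, f₀⟫ = 0 := by rw [← inner_conj_symm, o, map_zero]
  have hli : LinearIndependent ℂ ![f₀, f₁] := by
    refine Orthonormal.linearIndependent (orthonormal_iff_ite.2 fun i j => ?_)
    fin_cases i <;> fin_cases j <;> simp [inner_self_eq_norm_sq_to_K, n₀, n₁, o, o']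
  have hspan : Submodule.span ℂ {f₀, f₁} = Hx x := by
    refine Submodule.eq_of_le_of_finrank_le (Submodule.span_le.2 ?_) ?_
    · rintro _ (rfl | rfl) <;> assumption
    · have := finrank_span_eq_card hli
      rw [Matrix.range_cons, Matrix.range_cons, Matrix.range_empty, Set.union_empty,
        Set.singleton_union] at this
      simpa [this] using finrank_Hx_le x
  obtain ⟨c, d, rfl⟩ := Submodule.mem_span_pair.1 (hspan ▸ hξ)
  simp [inner_self_eq_norm_sq_to_K, n₀, n₁, o, o']

lemma inner_mul_inner_add (hf : ONBx x f₀ f₁) {χ : H} (hχ : χ ∈ Hx x) (ξ : H) :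
    ⟪ξ, f₀⟫ * ⟪f₀, χ⟫ + ⟪ξ, f₁⟫ * ⟪f₁, χ⟫ = ⟪ξ, χ⟫ := by
  conv_rhs => rw [hf.eq_add hχ]
  simp only [inner_add_right, inner_smul_right]
  ring

lemma map (hf : ONBx x f₀ f₁) (W : H ≃ₗᵢ[ℂ] H) (hW : ∀ ψ ∈ Hx x, W ψ ∈ Hx x) :
    ONBx x (W f₀) (W f₁) :=
  ⟨hW _ hf.1, hW _ hf.2.1, by rw [W.norm_map, hf.2.2.1], by rw [W.norm_map, hf.2.2.2.1],
    by rw [W.inner_map_map, hf.2.2.2.2]⟩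

end ONBx

def rightVec (r : ℤ → ℝ) (x : ℤ) : H :=
  (r x : ℂ) • e x 0 + (Real.sqrt (1 - r x ^ 2) : ℂ) • e x 1

def leftVec (r : ℤ → ℝ) (x : ℤ) : H :=
  (Real.sqrt (1 - r x ^ 2) : ℂ) • e x 0 - (r x : ℂ) • e x 1

lemma rightVec_mem_Hx (r : ℤ → ℝ) (x : ℤ) : rightVec r x ∈ Hx x :=
  add_mem (Submodule.smul_mem _ _ (e_mem_Hx x 0)) (Submodule.smul_mem _ _ (e_mem_Hx x 1))

lemma leftVec_mem_Hx (r : ℤ → ℝ) (x : ℤ) : leftVec r x ∈ Hx x :=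
  sub_mem (Submodule.smul_mem _ _ (e_mem_Hx x 0)) (Submodule.smul_mem _ _ (e_mem_Hx x 1))

lemma inner_e_rightVec (r : ℤ → ℝ) (x : ℤ) : ⟪e x 0, rightVec r x⟫ = r x := by
  simp [rightVec, inner_e_e, norm_e]

lemma onbx_rightVec_leftVec {r : ℤ → ℝ} {x : ℤ} (hr : r x ∈ Set.Icc (0 : ℝ) 1) :
    ONBx x (rightVec r x) (leftVec r x) := by
  have hs : ((Real.sqrt (1 - r x ^ 2) : ℂ)) ^ 2 = 1 - (r x : ℂ) ^ 2 := by
    rw [← Complex.ofReal_pow, Real.sq_sqrt (by nlinarith [hr.1, hr.2])]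
    push_cast; ring
  refine ⟨rightVec_mem_Hx r x, leftVec_mem_Hx r x,
    norm_eq_one_of_inner_self_eq_one (𝕜 := ℂ) ?_, norm_eq_one_of_inner_self_eq_one (𝕜 := ℂ) ?_, ?_⟩
  all_goals
    simp only [rightVec, leftVec, inner_add_left, inner_add_right, inner_sub_left,
      inner_sub_right, inner_smul_left, inner_smul_right, inner_e_e, Complex.conj_ofReal]
    norm_num
  · linear_combination hs
  · linear_combination hs
  · ring

section Walk

variable {p r : ℤ → ℝ} {V : H ≃ₗᵢ[ℂ] H}

lemma IsUprtk.apply_rightVec (hV : IsUprtk p r (fun _ => 0) (fun _ => 0) V) (x : ℤ) :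
    V (rightVec r x) = (p x : ℂ) • e x 0 + (Real.sqrt (1 - p x ^ 2) : ℂ) • e (x + 1) 1 := by
  have h := (hV x).1
  simp only [Complex.ofReal_zero, mul_zero, Complex.exp_zero, one_mul] at h
  exact h

lemma IsUprtk.apply_leftVec (hV : IsUprtk p r (fun _ => 0) (fun _ => 0) V) (x : ℤ) :
    V (leftVec r x)
      = (Real.sqrt (1 - p (x - 1) ^ 2) : ℂ) • e (x - 1) 0 - (p (x - 1) : ℂ) • e x 1 := by
  have h := (hV x).2
  simp only [Complex.ofReal_zero, mul_zero, neg_zero, Complex.exp_zero, one_mul] at h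
  exact h

lemma IsUprtk.apply_of_mem_Hx (hV : IsUprtk p r (fun _ => 0) (fun _ => 0) V)
    (hr : ∀ x, r x ∈ Set.Icc (0 : ℝ) 1) {x : ℤ} {ψ : H} (hψ : ψ ∈ Hx x) :
    V ψ = ⟪rightVec r x, ψ⟫ • ((p x : ℂ) • e x 0 + (Real.sqrt (1 - p x ^ 2) : ℂ) • e (x + 1) 1)
      + ⟪leftVec r x, ψ⟫ •
          ((Real.sqrt (1 - p (x - 1) ^ 2) : ℂ) • e (x - 1) 0 - (p (x - 1) : ℂ) • e x 1) := by
  conv_lhs => rw [(onbx_rightVec_leftVec (hr x)).eq_add hψ]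
  rw [map_add, map_smul, map_smul, hV.apply_rightVec, hV.apply_leftVec]

lemma IsUprtk.inner_apply_of_mem_succ (hV : IsUprtk p r (fun _ => 0) (fun _ => 0) V)
    (hr : ∀ x, r x ∈ Set.Icc (0 : ℝ) 1) {x : ℤ} {φ ψ : H} (hφ : φ ∈ Hx (x + 1))
    (hψ : ψ ∈ Hx x) :
    ⟪φ, V ψ⟫ = Real.sqrt (1 - p x ^ 2) * ⟪φ, e (x + 1) 1⟫ * ⟪rightVec r x, ψ⟫ := by
  have h₀ := inner_eq_zero_of_mem_Hx (by omega : x + 1 ≠ x) hφ (e_mem_Hx x 0)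
  have h₁ := inner_eq_zero_of_mem_Hx (by omega : x + 1 ≠ x) hφ (e_mem_Hx x 1)
  have h₂ := inner_eq_zero_of_mem_Hx (by omega : x + 1 ≠ x - 1) hφ (e_mem_Hx (x - 1) 0)
  rw [hV.apply_of_mem_Hx hr hψ]
  simp only [inner_add_right, inner_sub_right, inner_smul_right, h₀, h₁, h₂]
  ring

lemma IsUprtk.inner_apply_succ_of_mem (hV : IsUprtk p r (fun _ => 0) (fun _ => 0) V)
    (hr : ∀ x, r x ∈ Set.Icc (0 : ℝ) 1) {x : ℤ} {φ ψ : H} (hφ : φ ∈ Hx x)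
    (hψ : ψ ∈ Hx (x + 1)) :
    ⟪φ, V ψ⟫ = Real.sqrt (1 - p x ^ 2) * ⟪φ, e x 0⟫ * ⟪leftVec r (x + 1), ψ⟫ := by
  have h₀ := inner_eq_zero_of_mem_Hx (by omega : x ≠ x + 1) hφ (e_mem_Hx (x + 1) 0)
  have h₁ := inner_eq_zero_of_mem_Hx (by omega : x ≠ x + 1) hφ (e_mem_Hx (x + 1) 1)
  have h₂ := inner_eq_zero_of_mem_Hx (by omega : x ≠ x + 1 + 1) hφ (e_mem_Hx (x + 1 + 1) 1)
  rw [hV.apply_of_mem_Hx hr hψ]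
  simp only [inner_add_right, inner_sub_right, inner_smul_right, h₀, h₁, h₂, add_sub_cancel_right]
  ring

lemma IsUprtk.inner_apply_of_mem (hV : IsUprtk p r (fun _ => 0) (fun _ => 0) V)
    (hr : ∀ x, r x ∈ Set.Icc (0 : ℝ) 1) {x : ℤ} {φ ψ : H} (hφ : φ ∈ Hx x) (hψ : ψ ∈ Hx x) :
    ⟪φ, V ψ⟫ = p x * ⟪φ, e x 0⟫ * ⟪rightVec r x, ψ⟫
      - p (x - 1) * ⟪φ, e x 1⟫ * ⟪leftVec r x, ψ⟫ := by
  have h₀ := inner_eq_zero_of_mem_Hx (by omega : x ≠ x + 1) hφ (e_mem_Hx (x + 1) 1)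
  have h₁ := inner_eq_zero_of_mem_Hx (by omega : x ≠ x - 1) hφ (e_mem_Hx (x - 1) 0)
  rw [hV.apply_of_mem_Hx hr hψ]
  simp only [inner_add_right, inner_sub_right, inner_smul_right, h₀, h₁]
  ring

lemma IsUprtk.inner_apply_add_inner_apply (hV : IsUprtk p r (fun _ => 0) (fun _ => 0) V)
    (hr : ∀ x, r x ∈ Set.Icc (0 : ℝ) 1) {x : ℤ} {f₀ f₁ : H} (hf : ONBx x f₀ f₁) :
    ⟪f₀, V f₀⟫ + ⟪f₁, V f₁⟫ = r x * (p x + p (x - 1)) := by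
  rw [hV.inner_apply_of_mem hr hf.1 hf.1, hV.inner_apply_of_mem hr hf.2.1 hf.2.1]
  have h₀ := hf.inner_mul_inner_add (e_mem_Hx x 0) (rightVec r x)
  have h₁ := hf.inner_mul_inner_add (e_mem_Hx x 1) (leftVec r x)
  have hu : ⟪rightVec r x, e x 0⟫ = r x := by simp [rightVec, inner_e_e, norm_e]
  have hv : ⟪leftVec r x, e x 1⟫ = -r x := by simp [leftVec, inner_e_e, norm_e]
  rw [hu] at h₀
  rw [hv] at h₁
  linear_combination (p x : ℂ) * h₀ - (p (x - 1) : ℂ) * h₁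

end Walk

lemma UnitEquiv.refl (U : H ≃ₗᵢ[ℂ] H) : UnitEquiv U U :=
  ⟨LinearIsometryEquiv.refl ℂ H, fun _ => Submodule.map_id _, by ext; rfl⟩

lemma UnitEquiv.symm {U U' : H ≃ₗᵢ[ℂ] H} (h : UnitEquiv U U') : UnitEquiv U' U := by
  obtain ⟨W, hW, rfl⟩ := h
  exact ⟨W.symm, fun x => (Submodule.map_symm_eq_iff W.toLinearEquiv).2 (hW x), by ext; simp⟩

lemma UnitEquiv.exists_inner_eq {U U' : H ≃ₗᵢ[ℂ] H} (h : UnitEquiv U U') :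
    ∃ W : H ≃ₗᵢ[ℂ] H, (∀ x, ∀ ψ ∈ Hx x, W ψ ∈ Hx x) ∧ ∀ φ ψ, ⟪φ, U' ψ⟫ = ⟪W φ, U (W ψ)⟫ := by
  obtain ⟨W, hW, rfl⟩ := h
  refine ⟨W.symm, fun x ψ hψ => ?_, fun φ ψ => ?_⟩
  · rw [← hW x] at hψ
    exact (Submodule.mem_map_equiv _).1 hψ
  · rw [← W.inner_map_map (W.symm φ), W.apply_symm_apply]
    rfl

section Conjugation

variable {p p' a a' : ℤ → ℝ} {V V' W : H ≃ₗᵢ[ℂ] H}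

lemma sqrt_eq_mul_inner_rightVec (hV : IsUprtk p a (fun _ => 0) (fun _ => 0) V)
    (ha : ∀ x, a x ∈ Set.Icc (0 : ℝ) 1) (hV' : IsUprtk p' a' (fun _ => 0) (fun _ => 0) V')
    (hW : ∀ x, ∀ ψ ∈ Hx x, W ψ ∈ Hx x) (hVW : ∀ φ ψ, ⟪φ, V' ψ⟫ = ⟪W φ, V (W ψ)⟫) (x : ℤ) :
    (Real.sqrt (1 - p' x ^ 2) : ℂ) = Real.sqrt (1 - p x ^ 2)
      * ⟪W (e (x + 1) 1), e (x + 1) 1⟫ * ⟪rightVec a x, W (rightVec a' x)⟫ :=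
  calc (Real.sqrt (1 - p' x ^ 2) : ℂ) = ⟪e (x + 1) 1, V' (rightVec a' x)⟫ := by
        simp [hV'.apply_rightVec, inner_e_e, norm_e]
    _ = _ := hVW _ _
    _ = _ := hV.inner_apply_of_mem_succ ha (hW _ _ (e_mem_Hx _ _)) (hW _ _ (rightVec_mem_Hx _ _))

lemma sqrt_eq_mul_inner_leftVec (hV : IsUprtk p a (fun _ => 0) (fun _ => 0) V)
    (ha : ∀ x, a x ∈ Set.Icc (0 : ℝ) 1) (hV' : IsUprtk p' a' (fun _ => 0) (fun _ => 0) V')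
    (hW : ∀ x, ∀ ψ ∈ Hx x, W ψ ∈ Hx x) (hVW : ∀ φ ψ, ⟪φ, V' ψ⟫ = ⟪W φ, V (W ψ)⟫) (x : ℤ) :
    (Real.sqrt (1 - p' x ^ 2) : ℂ) = Real.sqrt (1 - p x ^ 2)
      * ⟪W (e x 0), e x 0⟫ * ⟪leftVec a (x + 1), W (leftVec a' (x + 1))⟫ :=
  calc (Real.sqrt (1 - p' x ^ 2) : ℂ) = ⟪e x 0, V' (leftVec a' (x + 1))⟫ := by
        simp [hV'.apply_leftVec, inner_e_e, norm_e]
    _ = _ := hVW _ _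
    _ = _ := hV.inner_apply_succ_of_mem ha (hW _ _ (e_mem_Hx _ _)) (hW _ _ (leftVec_mem_Hx _ _))

lemma coin_mul_add_eq (hV : IsUprtk p a (fun _ => 0) (fun _ => 0) V)
    (ha : ∀ x, a x ∈ Set.Icc (0 : ℝ) 1) (hV' : IsUprtk p' a' (fun _ => 0) (fun _ => 0) V')
    (ha' : ∀ x, a' x ∈ Set.Icc (0 : ℝ) 1)
    (hW : ∀ x, ∀ ψ ∈ Hx x, W ψ ∈ Hx x) (hVW : ∀ φ ψ, ⟪φ, V' ψ⟫ = ⟪W φ, V (W ψ)⟫) (x : ℤ) :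
    a' x * (p' x + p' (x - 1)) = a x * (p x + p (x - 1)) := by
  have key : ((a' x * (p' x + p' (x - 1)) : ℝ) : ℂ) = a x * (p x + p (x - 1)) :=
    calc ((a' x * (p' x + p' (x - 1)) : ℝ) : ℂ) = ⟪e x 0, V' (e x 0)⟫ + ⟪e x 1, V' (e x 1)⟫ := by
          push_cast; exact (hV'.inner_apply_add_inner_apply ha' (onbx_e x)).symm
      _ = ⟪W (e x 0), V (W (e x 0))⟫ + ⟪W (e x 1), V (W (e x 1))⟫ := by rw [hVW, hVW]
      _ = _ := hV.inner_apply_add_inner_apply ha ((onbx_e x).map W (hW x))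
  exact_mod_cast key

lemma sqrt_le_of_unitEquiv (hV : IsUprtk p a (fun _ => 0) (fun _ => 0) V)
    (ha : ∀ x, a x ∈ Set.Icc (0 : ℝ) 1) (hV' : IsUprtk p' a' (fun _ => 0) (fun _ => 0) V')
    (ha' : ∀ x, a' x ∈ Set.Icc (0 : ℝ) 1) (h : UnitEquiv V V') (x : ℤ) :
    Real.sqrt (1 - p' x ^ 2) ≤ Real.sqrt (1 - p x ^ 2) := by
  obtain ⟨W, hW, hVW⟩ := h.exists_inner_eq
  have key := congrArg norm (sqrt_eq_mul_inner_rightVec hV ha hV' hW hVW x)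
  simp only [norm_mul, Complex.norm_real, Real.norm_of_nonneg (Real.sqrt_nonneg _)] at key
  calc Real.sqrt (1 - p' x ^ 2) = _ := key
    _ ≤ Real.sqrt (1 - p x ^ 2) * 1 * 1 := by
        gcongr
        · exact norm_inner_le_one (by rw [W.norm_map, norm_e]) (norm_e _ _)
        · exact norm_inner_le_one (onbx_rightVec_leftVec (ha x)).2.2.1
            (by rw [W.norm_map, (onbx_rightVec_leftVec (ha' x)).2.2.1])
    _ = Real.sqrt (1 - p x ^ 2) := by ring

lemma coin_eq_of_sqrt_ne_zero (hV : IsUprtk p a (fun _ => 0) (fun _ => 0) V)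
    (ha : ∀ x, a x ∈ Set.Icc (0 : ℝ) 1) (hV' : IsUprtk p a' (fun _ => 0) (fun _ => 0) V')
    (ha' : ∀ x, a' x ∈ Set.Icc (0 : ℝ) 1) (h : UnitEquiv V V') {x : ℤ}
    (hq : Real.sqrt (1 - p x ^ 2) ≠ 0) : a' x = a x := by
  obtain ⟨W, hW, hVW⟩ := h.exists_inner_eq
  have hu := (onbx_rightVec_leftVec (ha x)).2.2.1
  have hWu' : ‖W (rightVec a' x)‖ = 1 := by rw [W.norm_map, (onbx_rightVec_leftVec (ha' x)).2.2.1]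
  have hWe : ‖W (e x 0)‖ = 1 := by rw [W.norm_map, norm_e]
  have hq' : (Real.sqrt (1 - p x ^ 2) : ℂ) ≠ 0 := Complex.ofReal_ne_zero.2 hq
  have hWe₁ : ‖W (e (x + 1) 1)‖ = 1 := by rw [W.norm_map, norm_e]
  have hv := (onbx_rightVec_leftVec (ha (x + 1))).2.2.2.1
  have hWv' : ‖W (leftVec a' (x + 1))‖ = 1 := by
    rw [W.norm_map, (onbx_rightVec_leftVec (ha' (x + 1))).2.2.2.1]
  have hR : ‖⟪rightVec a x, W (rightVec a' x)⟫‖ = 1 :=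
    (norm_eq_one_of_eq_mul_mul hq' (sqrt_eq_mul_inner_rightVec hV ha hV' hW hVW x)
      (norm_inner_le_one hWe₁ (norm_e (x + 1) 1)) (norm_inner_le_one hu hWu')).2
  have hL : ‖⟪e x 0, W (e x 0)⟫‖ = 1 := by
    rw [norm_inner_symm]
    exact (norm_eq_one_of_eq_mul_mul hq' (sqrt_eq_mul_inner_leftVec hV ha hV' hW hVW x)
      (norm_inner_le_one hWe (norm_e x 0)) (norm_inner_le_one hv hWv')).1
  calc a' x = ‖⟪e x 0, rightVec a' x⟫‖ := by
        rw [inner_e_rightVec, Complex.norm_real, Real.norm_of_nonneg (ha' x).1]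
    _ = ‖⟪W (e x 0), W (rightVec a' x)⟫‖ := by rw [W.inner_map_map]
    _ = ‖⟪e x 0, rightVec a x⟫‖ := by
        rw [eq_inner_smul_of_norm_inner_eq_one hu hWu' hR,
          eq_inner_smul_of_norm_inner_eq_one (norm_e x 0) hWe hL, inner_smul_left,
          inner_smul_right, norm_mul, norm_mul, RCLike.norm_conj, hR, hL, one_mul, one_mul]
    _ = a x := by rw [inner_e_rightVec, Complex.norm_real, Real.norm_of_nonneg (ha x).1]

lemma coin_eq_of_unitEquiv (hp : ∀ x, p x ∈ Set.Icc (0 : ℝ) 1)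
    (hV : IsUprtk p a (fun _ => 0) (fun _ => 0) V) (ha : ∀ x, a x ∈ Set.Icc (0 : ℝ) 1)
    (hV' : IsUprtk p a' (fun _ => 0) (fun _ => 0) V')
    (ha' : ∀ x, a' x ∈ Set.Icc (0 : ℝ) 1) (h : UnitEquiv V V') (x : ℤ) : a' x = a x := by
  by_cases hpx : p x + p (x - 1) = 0
  · have hp0 : p x = 0 := by linarith [(hp x).1, (hp (x - 1)).1]
    exact coin_eq_of_sqrt_ne_zero hV ha hV' ha' h (by simp [hp0])
  · obtain ⟨W, hW, hVW⟩ := h.exists_inner_eq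
    exact mul_right_cancel₀ hpx (coin_mul_add_eq hV ha hV' ha' hW hVW x)

end Conjugation

lemma ext_of_forall_mem_Hx {U U' : H ≃ₗᵢ[ℂ] H} (h : ∀ x, ∀ ψ ∈ Hx x, U ψ = U' ψ) : U = U' := by
  refine LinearIsometryEquiv.ext fun ψ => ?_
  have hψ := lp.hasSum_single (p := 2) (by norm_num) ψ
  have hterm (z : ℤ × Fin 2) : U (lp.single 2 z (ψ z)) = U' (lp.single 2 z (ψ z)) := by
    refine h z.1 _ ?_
    have hz : lp.single 2 z (ψ z) = ψ z • e z.1 z.2 := by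
      rw [e, ← lp.single_smul, smul_eq_mul, mul_one]
    exact hz ▸ Submodule.smul_mem _ _ (e_mem_Hx _ _)
  exact (hψ.mapL (clm U)).unique (by simpa [clm, hterm] using hψ.mapL (clm U'))

lemma IsUprtk.unique {p r : ℤ → ℝ} {V V' : H ≃ₗᵢ[ℂ] H}
    (hV : IsUprtk p r (fun _ => 0) (fun _ => 0) V) (hV' : IsUprtk p r (fun _ => 0) (fun _ => 0) V')
    (hr : ∀ x, r x ∈ Set.Icc (0 : ℝ) 1) : V = V' :=
  ext_of_forall_mem_Hx fun _ _ hψ => by rw [hV.apply_of_mem_Hx hr hψ, hV'.apply_of_mem_Hx hr hψ]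

lemma eq_of_sqrt_one_sub_sq_eq {s t : ℝ} (hs : s ∈ Set.Icc (0 : ℝ) 1) (ht : t ∈ Set.Icc (0 : ℝ) 1)
    (h : Real.sqrt (1 - s ^ 2) = Real.sqrt (1 - t ^ 2)) : s = t := by
  rw [Real.sqrt_inj (by nlinarith [hs.1, hs.2]) (by nlinarith [ht.1, ht.2])] at h
  nlinarith [hs.1, ht.1]

/-- **Corollary 4.5.** For `p, p′, a, a′ : ℤ → [0,1]`, the
quantum walks `U_{p,a} = U_{p,a,0,0}` and `U_{p′,a′} = U_{p′,a′,0,0}` are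
unitarily equivalent iff `p = p′` and `a = a′`. -/
theorem suzuki_unitary_equiv_iff (p p' a a' : ℤ → ℝ)
    (hp : ∀ x : ℤ, p x ∈ Set.Icc (0 : ℝ) 1) (hp' : ∀ x : ℤ, p' x ∈ Set.Icc (0 : ℝ) 1)
    (ha : ∀ x : ℤ, a x ∈ Set.Icc (0 : ℝ) 1) (ha' : ∀ x : ℤ, a' x ∈ Set.Icc (0 : ℝ) 1)
    (V V' : H ≃ₗᵢ[ℂ] H)
    (hV : IsUprtk p a (fun _ => 0) (fun _ => 0) V)
    (hV' : IsUprtk p' a' (fun _ => 0) (fun _ => 0) V') :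
    UnitEquiv V V' ↔ (p = p' ∧ a = a') := by
  constructor
  · intro h
    obtain rfl : p = p' := funext fun x => eq_of_sqrt_one_sub_sq_eq (hp x) (hp' x) <|
      le_antisymm (sqrt_le_of_unitEquiv hV' ha' hV ha h.symm x)
        (sqrt_le_of_unitEquiv hV ha hV' ha' h x)
    exact ⟨rfl, funext fun x => (coin_eq_of_unitEquiv hp hV ha hV' ha' h x).symm⟩
  · rintro ⟨rfl, rfl⟩
    rw [hV.unique hV' ha]
    exact UnitEquiv.refl V'
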